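/- Let V_a ⪯ V_b be symmetric matrices with V_a ⪰ λI, and let E_a, E_b be symmetric with operator norm at most η, ρ := η/λ < 1, c_ρ := (1+ρ)/(1−ρ). If λ_max((V_a+E_a)^{-1/2}(V_b+E_b)(V_a+E_a)^{-1/2}) ≤ α for some α ≥ 1, then for every x, ‖x‖_{V_a^{-1}} ≤ √(c_ρ α) · ‖x‖_{V_b^{-1}}. -/

import Mathlib

open Matrix

open scoped ComplexOrder in
/-- The square root of a positive semidefinite matrix, as defined in the older Mathlib
(`Matrix.PosSemidef.sqrt`, removed since). -/
noncomputable def Matrix.PosSemidef.sqrt {n 𝕜 : Type*} [Fintype n] [DecidableEq n] [RCLike 𝕜]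
    {A : Matrix n n 𝕜} (hA : A.PosSemidef) : Matrix n n 𝕜 :=
  hA.1.eigenvectorUnitary.1 * diagonal ((↑) ∘ (√·) ∘ hA.1.eigenvalues) *
    (star hA.1.eigenvectorUnitary : Matrix n n 𝕜)

/-!
Conjugating the trigger bound `M ≤ α • 1` by the square root of `Va + Ea` gives
`Vb + Eb ≤ α • (Va + Ea)`. Since `‖E‖ ≤ η = ρ λ` and `λ • 1 ≤ Va`, the perturbations are absorbed
into `Va`: `Vb ≤ (α + (α + 1) ρ) • Va ≤ (c_ρ α) • Va`. Inversion reverses the Loewner order,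
so `Va⁻¹ ≤ (c_ρ α) • Vb⁻¹`, and the claim follows by taking square roots.
-/

namespace Matrix

open scoped MatrixOrder ComplexOrder

section RCLike

variable {n 𝕜 : Type*} [Fintype n] [DecidableEq n] [RCLike 𝕜]

theorem PosSemidef.sqrt_eq_cfc {A : Matrix n n 𝕜} (hA : A.PosSemidef) :
    hA.sqrt = cfc Real.sqrt A := by
  rw [hA.1.cfc_eq, IsHermitian.cfc, Unitary.conjStarAlgAut_apply]
  rfl

theorem PosSemidef.sqrt_mul_self {A : Matrix n n 𝕜} (hA : A.PosSemidef) :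
    hA.sqrt * hA.sqrt = A := by
  rw [hA.sqrt_eq_cfc, ← cfc_mul Real.sqrt Real.sqrt A]
  conv_rhs => rw [← cfc_id' ℝ A]
  exact cfc_congr fun x hx => Real.mul_self_sqrt (spectrum_nonneg_of_nonneg hA.nonneg hx)

theorem PosSemidef.isHermitian_sqrt {A : Matrix n n 𝕜} (hA : A.PosSemidef) :
    hA.sqrt.IsHermitian := by
  rw [hA.sqrt_eq_cfc]
  exact cfc_predicate _ _

theorem IsHermitian.posSemidef_smul_one_sub {A : Matrix n n 𝕜} (hA : A.IsHermitian) {α : ℝ}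
    (h : ∀ i, hA.eigenvalues i ≤ α) : (α • (1 : Matrix n n 𝕜) - A).PosSemidef := by
  rw [← Matrix.le_iff, ← Algebra.algebraMap_eq_smul_one]
  refine le_algebraMap_of_spectrum_le (ha := hA.isSelfAdjoint) fun x hx => ?_
  obtain ⟨i, rfl⟩ := hA.spectrum_real_eq_range_eigenvalues ▸ hx
  exact h i

theorem IsHermitian.posSemidef_smul_mul_self_sub_iff {S B : Matrix n n 𝕜} (hS : S.IsHermitian)
    (hSu : IsUnit S) (α : ℝ) :
    (α • (S * S) - B).PosSemidef ↔ (α • (1 : Matrix n n 𝕜) - S⁻¹ * B * S⁻¹).PosSemidef := by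
  have hdet : IsUnit S.det := (isUnit_iff_isUnit_det S).mp hSu
  have hconj : star S⁻¹ * (α • (S * S) - B) * S⁻¹ = α • 1 - S⁻¹ * B * S⁻¹ := by
    rw [star_eq_conjTranspose, conjTranspose_nonsing_inv, hS.eq, Matrix.mul_sub, Matrix.sub_mul,
      Matrix.mul_smul, Matrix.smul_mul, ← Matrix.mul_assoc, nonsing_inv_mul _ hdet,
      Matrix.one_mul, Matrix.mul_assoc, mul_nonsing_inv _ hdet]
  rw [← hconj, (isUnit_nonsing_inv_iff.mpr hSu).posSemidef_star_left_conjugate_iff]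

end RCLike

section Real

variable {n : Type*} [DecidableEq n]

theorem PosDef.of_posSemidef_sub_smul_one {A : Matrix n n ℝ} {c : ℝ} (hc : 0 < c)
    (h : (A - c • 1).PosSemidef) : A.PosDef :=
  sub_add_cancel A (c • 1) ▸ PosDef.posSemidef_add h (PosDef.one.smul hc)

variable [Fintype n]

theorem PosDef.mulVec_inv_mulVec {B : Matrix n n ℝ} (hB : B.PosDef) (x : n → ℝ) :
    B *ᵥ (B⁻¹ *ᵥ x) = x := by
  rw [mulVec_mulVec, mul_nonsing_inv _ ((isUnit_iff_isUnit_det B).mp hB.isUnit), one_mulVec]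

/-- Fenchel–Young for the quadratic form of `B`; equality holds at `u = B⁻¹ *ᵥ x`. -/
theorem PosDef.two_mul_dotProduct_sub_le_dotProduct_inv_mulVec {B : Matrix n n ℝ}
    (hB : B.PosDef) (u x : n → ℝ) :
    2 * (u ⬝ᵥ x) - u ⬝ᵥ B *ᵥ u ≤ x ⬝ᵥ B⁻¹ *ᵥ x := by
  set v := B⁻¹ *ᵥ x
  have hv : B *ᵥ v = x := hB.mulVec_inv_mulVec x
  have hBt : Bᵀ = B := by simpa [conjTranspose_eq_transpose_of_trivial] using hB.1.eq
  have hvu : v ⬝ᵥ B *ᵥ u = u ⬝ᵥ x := by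
    rw [dotProduct_mulVec, ← mulVec_transpose, hBt, hv, dotProduct_comm]
  have hsq := hB.posSemidef.dotProduct_mulVec_nonneg (u - v)
  simp only [star_trivial, mulVec_sub, dotProduct_sub, sub_dotProduct, hv, hvu] at hsq
  rw [dotProduct_comm v x] at hsq
  linarith

theorem PosDef.dotProduct_inv_mulVec_le {A B : Matrix n n ℝ} (hA : A.PosDef) (hB : B.PosDef)
    {c : ℝ} (hc : 0 < c) (hBA : (c • A - B).PosSemidef) (x : n → ℝ) :
    x ⬝ᵥ A⁻¹ *ᵥ x ≤ c * (x ⬝ᵥ B⁻¹ *ᵥ x) := by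
  set u := A⁻¹ *ᵥ x
  have hu : A *ᵥ u = x := hA.mulVec_inv_mulVec x
  have hAB : u ⬝ᵥ B *ᵥ u ≤ c * (u ⬝ᵥ A *ᵥ u) := by
    have := hBA.dotProduct_mulVec_nonneg u
    simp only [star_trivial, sub_mulVec, smul_mulVec, dotProduct_sub, dotProduct_smul,
      smul_eq_mul] at this
    linarith
  have hconj := hB.two_mul_dotProduct_sub_le_dotProduct_inv_mulVec (c⁻¹ • u) x
  simp only [mulVec_smul, dotProduct_smul, smul_dotProduct, smul_eq_mul] at hconj
  rw [hu] at hAB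
  have hscaled : 2 * (u ⬝ᵥ x) - c⁻¹ * (u ⬝ᵥ B *ᵥ u) ≤ c * (x ⬝ᵥ B⁻¹ *ᵥ x) := by
    calc _ = c * (2 * (c⁻¹ * (u ⬝ᵥ x)) - c⁻¹ * (c⁻¹ * (u ⬝ᵥ B *ᵥ u))) := by field_simp
      _ ≤ _ := mul_le_mul_of_nonneg_left hconj hc.le
  have hBu : c⁻¹ * (u ⬝ᵥ B *ᵥ u) ≤ u ⬝ᵥ x := by rwa [inv_mul_le_iff₀ hc]
  rw [dotProduct_comm]
  linarith

end Real

end Matrix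

theorem stmt_13_general {d : ℕ} (Va Vb Ea Eb : Matrix (Fin d) (Fin d) ℝ)
    (lam η : ℝ) (hlam : 0 < lam) (hη : 0 ≤ η)
    (hVal : (Va - lam • (1 : Matrix (Fin d) (Fin d) ℝ)).PosSemidef)
    (hVab : (Vb - Va).PosSemidef)
    (hEa1 : (η • (1 : Matrix (Fin d) (Fin d) ℝ) - Ea).PosSemidef)
    (hEa2 : (Ea + η • (1 : Matrix (Fin d) (Fin d) ℝ)).PosSemidef)
    (hEb2 : (Eb + η • (1 : Matrix (Fin d) (Fin d) ℝ)).PosSemidef)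
    (ρ cρ : ℝ) (hρ : ρ = η / lam) (hρ1 : ρ < 1) (hcρ : cρ = (1 + ρ) / (1 - ρ))
    (htaP : (Va + Ea).PosSemidef)
    (M : Matrix (Fin d) (Fin d) ℝ)
    (hM : M = (htaP.sqrt)⁻¹ * (Vb + Eb) * (htaP.sqrt)⁻¹)
    (hMH : M.IsHermitian)
    (α : ℝ) (hα : 1 ≤ α) (hmax : ∀ i, hMH.eigenvalues i ≤ α) :
    ∀ x : Fin d → ℝ,
      Real.sqrt (x ⬝ᵥ (Va⁻¹).mulVec x)
        ≤ Real.sqrt (cρ * α) * Real.sqrt (x ⬝ᵥ (Vb⁻¹).mulVec x) := by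
  have hρ0 : 0 ≤ ρ := hρ ▸ div_nonneg hη hlam.le
  have hηρ : η = ρ * lam := by rw [hρ, div_mul_cancel₀ _ hlam.ne']
  have hcoef : α + (α + 1) * ρ ≤ cρ * α := by
    rw [hcρ, div_mul_eq_mul_div, le_div_iff₀ (by linarith)]
    nlinarith [mul_nonneg hρ0 (by linarith : 0 ≤ α - 1),
      mul_nonneg (sq_nonneg ρ) (by linarith : 0 ≤ α + 1)]
  have hcα : 0 < cρ * α := by linarith [mul_nonneg (by linarith : 0 ≤ α + 1) hρ0]
  have hVa : Va.PosDef := .of_posSemidef_sub_smul_one hlam hVal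
  have hVb : Vb.PosDef := sub_add_cancel Vb Va ▸ PosDef.posSemidef_add hVab hVa
  have hT : (Va + Ea).PosDef := by
    refine .of_posSemidef_sub_smul_one (c := lam - η) (by nlinarith) ?_
    convert hVal.add hEa2 using 1
    module
  have hS : IsUnit htaP.sqrt :=
    isUnit_of_mul_isUnit_left (htaP.sqrt_mul_self ▸ hT.isUnit)
  have htrig : (α • (Va + Ea) - (Vb + Eb)).PosSemidef := by
    rw [← htaP.sqrt_mul_self, htaP.isHermitian_sqrt.posSemidef_smul_mul_self_sub_iff hS, ← hM]
    exact hMH.posSemidef_smul_one_sub hmax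
  have hloewner : ((cρ * α) • Va - Vb).PosSemidef := by
    have hsum := (((htrig.add hEb2).add (hEa1.smul (by linarith : 0 ≤ α))).add
      (hVal.smul (by positivity : 0 ≤ (α + 1) * ρ))).add
      (hVa.posSemidef.smul (sub_nonneg.mpr hcoef))
    convert hsum using 1
    subst hηρ
    module
  intro x
  rw [← Real.sqrt_mul hcα.le]
  exact Real.sqrt_le_sqrt (hVa.dotProduct_inv_mulVec_le hVb hcα hloewner x)

/-- Part (i) of the main theorem: if the private Rayleigh trigger is not fired,
`λ_max((V_a+E_a)^{-1/2}(V_b+E_b)(V_a+E_a)^{-1/2}) ≤ α`, then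
`‖x‖_{V_a⁻¹} ≤ √(c_ρ α) · ‖x‖_{V_b⁻¹}` for every `x`. -/
theorem stmt_13 {d : ℕ} (Va Vb Ea Eb : Matrix (Fin d) (Fin d) ℝ)
    (hVa : Va.IsHermitian) (hVb : Vb.IsHermitian)
    (hEa : Ea.IsHermitian) (hEb : Eb.IsHermitian)
    (lam η : ℝ) (hlam : 0 < lam) (hη : 0 ≤ η)
    (hVal : (Va - lam • (1 : Matrix (Fin d) (Fin d) ℝ)).PosSemidef)
    (hVab : (Vb - Va).PosSemidef)
    (hEa1 : (η • (1 : Matrix (Fin d) (Fin d) ℝ) - Ea).PosSemidef)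
    (hEa2 : (Ea + η • (1 : Matrix (Fin d) (Fin d) ℝ)).PosSemidef)
    (hEb1 : (η • (1 : Matrix (Fin d) (Fin d) ℝ) - Eb).PosSemidef)
    (hEb2 : (Eb + η • (1 : Matrix (Fin d) (Fin d) ℝ)).PosSemidef)
    (ρ cρ : ℝ) (hρ : ρ = η / lam) (hρ1 : ρ < 1) (hcρ : cρ = (1 + ρ) / (1 - ρ))
    (htaP : (Va + Ea).PosSemidef)
    (M : Matrix (Fin d) (Fin d) ℝ)
    (hM : M = (htaP.sqrt)⁻¹ * (Vb + Eb) * (htaP.sqrt)⁻¹)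
    (hMH : M.IsHermitian)
    (α : ℝ) (hα : 1 ≤ α) (hmax : ∀ i, hMH.eigenvalues i ≤ α) :
    ∀ x : Fin d → ℝ,
      Real.sqrt (x ⬝ᵥ (Va⁻¹).mulVec x)
        ≤ Real.sqrt (cρ * α) * Real.sqrt (x ⬝ᵥ (Vb⁻¹).mulVec x) :=
  stmt_13_general Va Vb Ea Eb lam η hlam hη hVal hVab hEa1 hEa2 hEb2 ρ cρ hρ hρ1 hcρ htaP M hM hMH α
    hα hmax
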